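/- arXiv:1403.2220 — 2 statements merged into one kernel-verified Lean document; each statement's English description precedes it below -/
import Mathlib

section
/- Let u be a positive radial solution of Δu + λu = 0 in the ball B_R ⊂ ℝⁿ with Robin boundary condition ∂_ν u + αu = 0 on ∂B_R, where α > 0 and λ > 0. Then −α² + ((n−1)/R)α − λ ≤ 0. -/
/-!
Write `z = u'/u`. It satisfies the Riccati equation `z' = -z² - (n-1)z/r - λ` on `(0, R]`, with
`z(0) = 0` (the equation multiplied by `r`, at `r = 0`) and `z(R) = -α` (the Robin condition).
If `-α² + (n-1)α/R - λ > 0`, then at every `c ∈ (0, R]` with `z(c) = -α` we get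
`z'(c) = -α² + (n-1)α/c - λ > 0`, so `z + α`, which starts at `α > 0`, can only cross zero
upwards and never reaches it, contradicting `z(R) = -α`.
-/

open Set Filter Topology

-- At the first point `c` where `f ≤ 0` we have `f c = 0` and `f > 0` on `[a, c)`, so `f' c ≤ 0`.

theorem pos_of_hasDerivWithinAt_pos_of_eq_zero {f f' : ℝ → ℝ} {a b : ℝ}
    (hf : ContinuousOn f (Icc a b)) (ha : 0 < f a)
    (hzero : ∀ c ∈ Ioc a b, f c = 0 → HasDerivWithinAt f (f' c) (Icc a b) c ∧ 0 < f' c) :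
    ∀ x ∈ Icc a b, 0 < f x := by
  by_contra! hneg
  obtain ⟨x, hx, hfx⟩ := hneg
  set S := Icc a b ∩ f ⁻¹' Iic 0
  have hS_bdd : BddBelow S := ⟨a, fun y hy => hy.1.1⟩
  have hcS : sInf S ∈ S :=
    (hf.preimage_isClosed_of_isClosed isClosed_Icc isClosed_Iic).csInf_mem ⟨x, hx, hfx⟩ hS_bdd
  set c := sInf S
  have hpos_before : ∀ y ∈ Ico a c, 0 < f y := fun y hy => by
    by_contra! hfy
    exact (csInf_le hS_bdd ⟨⟨hy.1, hy.2.le.trans hcS.1.2⟩, hfy⟩).not_gt hy.2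
  have hac : a < c := hcS.1.1.lt_of_ne fun hac => (hac ▸ ha).not_ge hcS.2
  have hne : (𝓝[Ico a c] c).NeBot := by
    rw [← mem_closure_iff_nhdsWithin_neBot, closure_Ico hac.ne]
    exact right_mem_Icc.2 hac.le
  have hpos_ev : ∀ᶠ y in 𝓝[Ico a c] c, 0 < f y := eventually_nhdsWithin_of_forall hpos_before
  have hsub : Ico a c ⊆ Icc a b := fun y hy => ⟨hy.1, hy.2.le.trans hcS.1.2⟩
  have hfc : f c = 0 := le_antisymm hcS.2 <|
    ge_of_tendsto (((hf c hcS.1).mono hsub).tendsto) (hpos_ev.mono fun _ hy => hy.le)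
  obtain ⟨hderiv, hpos⟩ := hzero c ⟨hac, hcS.1.2⟩ hfc
  have hslope : Tendsto (slope f c) (𝓝[Ico a c] c) (𝓝 (f' c)) :=
    (hasDerivWithinAt_iff_tendsto_slope' fun h => lt_irrefl c h.2).1 (hderiv.mono hsub)
  have hslope_neg : ∀ᶠ y in 𝓝[Ico a c] c, slope f c y < 0 := by
    filter_upwards [hpos_ev, self_mem_nhdsWithin] with y hfy hy
    rw [slope_def_field, hfc, sub_zero]
    exact div_neg_of_pos_of_neg hfy (sub_neg.2 hy.2)
  exact (le_of_tendsto hslope (hslope_neg.mono fun _ hy => hy.le)).not_gt hpos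

theorem HasDerivWithinAt.div_of_riccati {u v : ℝ → ℝ} {v' k lam r : ℝ} {s : Set ℝ}
    (hu : HasDerivWithinAt u (v r) s r) (hv : HasDerivWithinAt v v' s r) (hur : u r ≠ 0)
    (hode : v' + k / r * v r + lam * u r = 0) :
    HasDerivWithinAt (fun x => v x / u x) (-(v r / u r) ^ 2 - k / r * (v r / u r) - lam) s r := by
  refine (hv.div hu hur).congr_deriv ?_
  rw [show v' = -(k / r * v r) - lam * u r by linarith]
  field_simp
  ring

-- Multiplied by `r`, the equation has continuous coefficients on `[0, R]` and extends there.
theorem radial_ode_Icc {u : ℝ → ℝ} {R k lam : ℝ} (hR : 0 < R)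
    (hu : ContDiffOn ℝ 2 u (Icc 0 R))
    (hode : ∀ r ∈ Ioo 0 R, deriv (deriv u) r + k / r * deriv u r + lam * u r = 0) :
    ∀ r ∈ Icc 0 R, k * derivWithin u (Icc 0 R) r +
      r * (derivWithin (derivWithin u (Icc 0 R)) (Icc 0 R) r + lam * u r) = 0 := by
  set g := derivWithin u (Icc 0 R)
  have hIcc : UniqueDiffOn ℝ (Icc (0 : ℝ) R) := uniqueDiffOn_Icc hR
  have hg : ContDiffOn ℝ 1 g (Icc 0 R) := hu.derivWithin hIcc (by norm_num)
  have hcont : ContinuousOn (fun r => k * g r +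
      r * (derivWithin g (Icc 0 R) r + lam * u r)) (Icc 0 R) :=
    (continuousOn_const.mul hg.continuousOn).add (continuousOn_id.mul
      ((hg.continuousOn_derivWithin hIcc le_rfl).add (continuousOn_const.mul hu.continuousOn)))
  refine EqOn.of_subset_closure (fun r hr => ?_) hcont continuousOn_const Ioo_subset_Icc_self
    (closure_Ioo hR.ne).ge
  have hg_eq : g =ᶠ[𝓝 r] deriv u := eventually_of_mem (Ioo_mem_nhds hr.1 hr.2)
    fun y hy => derivWithin_of_mem_nhds (Icc_mem_nhds hy.1 hy.2)
  rw [derivWithin_of_mem_nhds (Icc_mem_nhds hr.1 hr.2), hg_eq.deriv_eq, hg_eq.eq_of_nhds]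
  calc k * deriv u r + r * (deriv (deriv u) r + lam * u r)
      = r * (deriv (deriv u) r + k / r * deriv u r + lam * u r) := by
        field_simp [hr.1.ne']
        ring
    _ = 0 := by rw [hode r hr, mul_zero]

section Riccati

variable {u : ℝ → ℝ} {R k lam : ℝ}

noncomputable def riccatiVar (u : ℝ → ℝ) (R r : ℝ) : ℝ :=
  derivWithin u (Icc 0 R) r / u r

theorem continuousOn_riccatiVar (hR : 0 < R) (hu : ContDiffOn ℝ 2 u (Icc 0 R))
    (hpos : ∀ r ∈ Icc 0 R, 0 < u r) : ContinuousOn (riccatiVar u R) (Icc 0 R) :=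
  (hu.continuousOn_derivWithin (uniqueDiffOn_Icc hR) (by norm_num)).div hu.continuousOn
    fun r hr => (hpos r hr).ne'

theorem riccatiVar_zero (hR : 0 < R) (hk : k ≠ 0) (hu : ContDiffOn ℝ 2 u (Icc 0 R))
    (hode : ∀ r ∈ Ioo 0 R, deriv (deriv u) r + k / r * deriv u r + lam * u r = 0) :
    riccatiVar u R 0 = 0 := by
  have := radial_ode_Icc hR hu hode 0 (left_mem_Icc.2 hR.le)
  rw [zero_mul, add_zero, mul_eq_zero, or_iff_right hk] at this
  rw [riccatiVar, this, zero_div]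

theorem hasDerivWithinAt_riccatiVar (hR : 0 < R) (hu : ContDiffOn ℝ 2 u (Icc 0 R))
    (hpos : ∀ r ∈ Icc 0 R, 0 < u r)
    (hode : ∀ r ∈ Ioo 0 R, deriv (deriv u) r + k / r * deriv u r + lam * u r = 0)
    {r : ℝ} (hr : r ∈ Ioc 0 R) :
    HasDerivWithinAt (riccatiVar u R)
      (-riccatiVar u R r ^ 2 - k / r * riccatiVar u R r - lam) (Icc 0 R) r := by
  have hr_mem : r ∈ Icc 0 R := Ioc_subset_Icc_self hr
  have hg : ContDiffOn ℝ 1 (derivWithin u (Icc 0 R)) (Icc 0 R) :=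
    hu.derivWithin (uniqueDiffOn_Icc hR) (by norm_num)
  refine HasDerivWithinAt.div_of_riccati
    (hu.differentiableOn (by norm_num) r hr_mem).hasDerivWithinAt
    (hg.differentiableOn one_ne_zero r hr_mem).hasDerivWithinAt (hpos r hr_mem).ne' ?_
  have := radial_ode_Icc hR hu hode r hr_mem
  field_simp [hr.1.ne']
  linarith

theorem riccatiVar_of_robin {α : ℝ} (hR : 0 < R) (hα : 0 < α) (hpos : 0 < u R)
    (hRobin : deriv u R + α * u R = 0) : riccatiVar u R R = -α := by
  have hderiv : deriv u R = -(α * u R) := by linarith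
  -- `deriv u R` is a two-sided derivative, with junk value `0` where `u` is not differentiable;
  -- being nonzero, it is a genuine derivative and agrees with the one-sided one.
  have hdiff : DifferentiableAt ℝ u R :=
    differentiableAt_of_deriv_ne_zero (hderiv ▸ (neg_neg_of_pos (mul_pos hα hpos)).ne)
  rw [riccatiVar, hdiff.derivWithin (uniqueDiffOn_Icc hR R (right_mem_Icc.2 hR.le)), hderiv,
    neg_div, mul_div_cancel_right₀ α hpos.ne']

end Riccati

theorem radial_robin_eigenfunction_sign_general (n : ℕ) (hn : 2 ≤ n)
    (R α lam : ℝ) (hR : 0 < R) (hα : 0 < α)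
    (u : ℝ → ℝ) (hu : ContDiffOn ℝ 2 u (Set.Icc 0 R))
    (hpos : ∀ r ∈ Set.Icc (0 : ℝ) R, 0 < u r)
    (hode : ∀ r ∈ Set.Ioo (0 : ℝ) R,
      deriv (deriv u) r + ((n : ℝ) - 1) / r * deriv u r + lam * u r = 0)
    (hRobin : deriv u R + α * u R = 0) :
    -α ^ 2 + ((n : ℝ) - 1) / R * α - lam ≤ 0 := by
  have hk : 0 < (n : ℝ) - 1 := by
    have : (2 : ℝ) ≤ n := by exact_mod_cast hn
    linarith
  have hR_mem : R ∈ Icc 0 R := right_mem_Icc.2 hR.le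
  by_contra! hQ
  have hz_pos : ∀ r ∈ Icc 0 R, 0 < riccatiVar u R r + α := by
    refine pos_of_hasDerivWithinAt_pos_of_eq_zero
      (f' := fun r => -riccatiVar u R r ^ 2 - ((n : ℝ) - 1) / r * riccatiVar u R r - lam)
      ((continuousOn_riccatiVar hR hu hpos).add continuousOn_const)
      (by rwa [riccatiVar_zero hR hk.ne' hu hode, zero_add]) fun c hc hzc => ?_
    refine ⟨(hasDerivWithinAt_riccatiVar hR hu hpos hode hc).add_const α, ?_⟩
    have hcR : ((n : ℝ) - 1) / R * α ≤ ((n : ℝ) - 1) / c * α :=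
      mul_le_mul_of_nonneg_right (div_le_div_of_nonneg_left hk.le hc.1 hc.2) hα.le
    rw [eq_neg_of_add_eq_zero_left hzc]
    linarith
  have := hz_pos R hR_mem
  rw [riccatiVar_of_robin hR hα (hpos R hR_mem) hRobin, neg_add_cancel] at this
  exact this.false

theorem radial_robin_eigenfunction_sign (n : ℕ) (hn : 2 ≤ n)
    (R α lam : ℝ) (hR : 0 < R) (hα : 0 < α) (hlam : 0 < lam)
    (u : ℝ → ℝ) (hu : ContDiffOn ℝ 2 u (Set.Icc 0 R))
    (hpos : ∀ r ∈ Set.Icc (0 : ℝ) R, 0 < u r)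
    (hode : ∀ r ∈ Set.Ioo (0 : ℝ) R,
      deriv (deriv u) r + ((n : ℝ) - 1) / r * deriv u r + lam * u r = 0)
    (h0 : deriv u 0 = 0)
    (hRobin : deriv u R + α * u R = 0) :
    -α ^ 2 + ((n : ℝ) - 1) / R * α - lam ≤ 0 :=
  radial_robin_eigenfunction_sign_general n hn R α lam hR hα u hu hpos hode hRobin
end

section
/- Let z : [0,R] → ℝ be C¹ with z(0) = 0, z(R) = −α for some α > 0, satisfying z'(r) + z(r)² + ((n−1)/r) z(r) + λ = 0 on (0,R] with λ > 0 and n ≥ 2. Then z'(R) ≤ 0, i.e. α² − ((n−1)/R)α + λ ≥ 0. -/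
/-!
If the quadratic `α² - ((n-1)/R) α + λ` were negative, look at the first radius `t ∈ (0, R]` at
which `z` reaches the level `-α`. Since `z > -α` before `t`, the derivative `z'(t)` is `≤ 0`; but
the equation at `t` gives `z'(t) = -(α² - ((n-1)/t) α + λ)`, which is at least the negation of
the quadratic at `R` because `(n-1)/t ≥ (n-1)/R`, hence `> 0`. So the quadratic is nonnegative,
and it equals `-z'(R)` by the equation at `R`.
-/

open Set

theorem ContinuousOn.exists_first_eq_of_lt {f : ℝ → ℝ} {a b c : ℝ} (hab : a ≤ b)
    (hf : ContinuousOn f (Icc a b)) (ha : c < f a) (hb : f b = c) :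
    ∃ t ∈ Ioc a b, f t = c ∧ ∀ x ∈ Icc a t, c ≤ f x := by
  set S := Icc a b ∩ f ⁻¹' Iic c
  have hbS : b ∈ S := ⟨right_mem_Icc.2 hab, hb.le⟩
  have hSbdd : BddBelow S := ⟨a, fun x hx => hx.1.1⟩
  have htS : sInf S ∈ S :=
    (hf.preimage_isClosed_of_isClosed isClosed_Icc isClosed_Iic).csInf_mem ⟨b, hbS⟩ hSbdd
  set t := sInf S
  have htb : t ≤ b := csInf_le hSbdd hbS
  have hat : a < t := htS.1.1.lt_of_ne fun h => (h ▸ ha).not_ge htS.2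
  have hft : f t = c := by
    obtain ⟨y, hy, hfy⟩ := intermediate_value_Icc' hat.le (hf.mono (Icc_subset_Icc_right htb))
      ⟨htS.2, ha.le⟩
    have hty : t ≤ y := csInf_le hSbdd ⟨⟨hy.1, hy.2.trans htb⟩, hfy.le⟩
    rwa [le_antisymm hy.2 hty] at hfy
  refine ⟨t, ⟨hat, htb⟩, hft, fun x hx => ?_⟩
  rcases hx.2.lt_or_eq with hxt | rfl
  · by_contra! hfx
    exact (csInf_le hSbdd ⟨⟨hx.1, hxt.le.trans htb⟩, hfx.le⟩).not_gt hxt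
  · exact hft.ge

theorem deriv_nonpos_of_isMinOn_Icc {f : ℝ → ℝ} {a b : ℝ} (hab : a < b)
    (hmin : IsMinOn f (Icc a b) b) : deriv f b ≤ 0 := by
  by_cases hdiff : DifferentiableAt ℝ f b
  · have hcone : a - b ∈ posTangentConeAt (Icc a b) b :=
      sub_mem_posTangentConeAt_of_segment_subset (by rw [segment_symm, segment_eq_Icc hab.le])
    have hmul := hmin.localize.hasFDerivWithinAt_nonneg
      hdiff.hasDerivAt.hasDerivWithinAt.hasFDerivWithinAt hcone
    simp only [ContinuousLinearMap.toSpanSingleton_apply, smul_eq_mul] at hmul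
    nlinarith
  · rw [deriv_zero_of_not_differentiableAt hdiff]

theorem riccati_endpoint_sign_general (n : ℕ) (hn : 2 ≤ n)
    (R α lam : ℝ) (hR : 0 < R) (hα : 0 < α)
    (z : ℝ → ℝ) (hz : ContDiffOn ℝ 1 z (Set.Icc 0 R))
    (h0 : z 0 = 0) (hRv : z R = -α)
    (hode : ∀ r ∈ Set.Ioc (0 : ℝ) R,
      deriv z r + (z r) ^ 2 + ((n : ℝ) - 1) / r * z r + lam = 0) :
    deriv z R ≤ 0 ∧ α ^ 2 - ((n : ℝ) - 1) / R * α + lam ≥ 0 := by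
  have hodeR := hode R ⟨hR, le_rfl⟩
  rw [hRv] at hodeR
  have hquad : α ^ 2 - ((n : ℝ) - 1) / R * α + lam ≥ 0 := by
    by_contra! hneg
    obtain ⟨t, ⟨ht0, htR⟩, hzt, hge⟩ :=
      hz.continuousOn.exists_first_eq_of_lt hR.le (by rw [h0]; linarith) hRv
    have hderiv : deriv z t ≤ 0 :=
      deriv_nonpos_of_isMinOn_Icc ht0 (isMinOn_iff.2 fun x hx => hzt ▸ hge x hx)
    have hodet := hode t ⟨ht0, htR⟩
    rw [hzt] at hodet
    have hcoef : ((n : ℝ) - 1) / R * α ≤ ((n : ℝ) - 1) / t * α := by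
      have hn1 : (1 : ℝ) ≤ n := by exact_mod_cast one_le_two.trans hn
      gcongr
    linarith
  exact ⟨by linarith, hquad⟩

theorem riccati_endpoint_sign (n : ℕ) (hn : 2 ≤ n)
    (R α lam : ℝ) (hR : 0 < R) (hα : 0 < α) (hlam : 0 < lam)
    (z : ℝ → ℝ) (hz : ContDiffOn ℝ 1 z (Set.Icc 0 R))
    (h0 : z 0 = 0) (hRv : z R = -α)
    (hode : ∀ r ∈ Set.Ioc (0 : ℝ) R,
      deriv z r + (z r) ^ 2 + ((n : ℝ) - 1) / r * z r + lam = 0) :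
    deriv z R ≤ 0 ∧ α ^ 2 - ((n : ℝ) - 1) / R * α + lam ≥ 0 :=
  riccati_endpoint_sign_general n hn R α lam hR hα z hz h0 hRv hode
end
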